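/- arXiv:2207.09129 — 2 statements merged into one kernel-verified Lean document; each statement's English description precedes it below -/
import Mathlib

section
/- For nonnegative measurable functions f, g on a set Ω of finite measure, ∫_0^{|Ω|} f*(s) g_*(s) ds ≤ ∫_Ω f g dx, where g_*(s) = g*(|Ω| − s) is the increasing rearrangement. -/
/-!
By the layer-cake formula, applied once to each factor, both sides are integrals over
`t, τ > 0` of the measure of the joint superlevel set `{f > t} ∩ {g > τ}` (of `f, g` on `Ω`,
resp. of `f*` and `g*(|Ω| - ·)` on `(0, |Ω|]`), so it suffices to compare these measures.
Writing `a = λ_f(t)` and `b = λ_g(τ)` for the distribution functions, `f*(s) > t` forces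
`s ≤ a` and `g*(|Ω| - s) > τ` forces `s ≥ |Ω| - b`; so the joint superlevel set of the
rearrangements has length at most `a + b - |Ω|`, which inclusion–exclusion bounds by
`|{f > t} ∩ {g > τ}|`.
-/

open MeasureTheory Set
open scoped ENNReal NNReal

noncomputable def distFun {α : Type*} [MeasurableSpace α] (μ : Measure α) (f : α → ℝ) (t : ℝ) : ℝ≥0∞ :=
  μ {x | t < |f x|}

noncomputable def decRearr {α : Type*} [MeasurableSpace α] (μ : Measure α) (f : α → ℝ) (s : ℝ) : ℝ :=
  sInf {t : ℝ | 0 ≤ t ∧ distFun μ f t < ENNReal.ofReal s}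

section Rearrangement

variable {α : Type*} [MeasurableSpace α] (μ : Measure α) (f : α → ℝ)

lemma decRearr_nonneg (s : ℝ) : 0 ≤ decRearr μ f s :=
  Real.sInf_nonneg fun _ ht => ht.1

lemma distFun_ne_top [IsFiniteMeasure μ] (t : ℝ) : distFun μ f t ≠ ∞ :=
  measure_ne_top μ _

lemma bddBelow_decRearr_set (s : ℝ) :
    BddBelow {t : ℝ | 0 ≤ t ∧ distFun μ f t < ENNReal.ofReal s} :=
  ⟨0, fun _ ht => ht.1⟩

lemma decRearr_le_decRearr {s s' : ℝ} (hss' : s ≤ s')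
    (hne : {t : ℝ | 0 ≤ t ∧ distFun μ f t < ENNReal.ofReal s}.Nonempty) :
    decRearr μ f s' ≤ decRearr μ f s :=
  csInf_le_csInf (bddBelow_decRearr_set μ f s') hne
    fun _ ht => ⟨ht.1, ht.2.trans_le (ENNReal.ofReal_le_ofReal hss')⟩

lemma nonempty_decRearr_set_of_pos {s : ℝ} (hs : 0 < decRearr μ f s) :
    {t : ℝ | 0 ≤ t ∧ distFun μ f t < ENNReal.ofReal s}.Nonempty := by
  by_contra! hempty
  simp only [decRearr, hempty, Real.sInf_empty, lt_irrefl] at hs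

-- `decRearr` is only antitone where it is positive: `sInf ∅ = 0` below that.
lemma measurable_decRearr : Measurable (decRearr μ f) := by
  refine measurable_of_Ioi fun c => ?_
  rcases lt_or_ge c 0 with hc | hc
  · convert MeasurableSet.univ
    exact eq_univ_of_forall fun s => hc.trans_le (decRearr_nonneg μ f s)
  refine OrdConnected.measurableSet ⟨fun x hx y hy z hz => ?_⟩
  have hne := nonempty_decRearr_set_of_pos μ f (hc.trans_lt hx)
  exact hy.trans_le (decRearr_le_decRearr μ f hz.2 (hne.mono
    fun _ ht => ⟨ht.1, ht.2.trans_le (ENNReal.ofReal_le_ofReal hz.1)⟩))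

lemma ofReal_le_distFun_of_lt_decRearr {s t : ℝ} (ht : 0 ≤ t) (h : t < decRearr μ f s) :
    ENNReal.ofReal s ≤ distFun μ f t := by
  by_contra! hlt
  exact (csInf_le (bddBelow_decRearr_set μ f s) ⟨ht, hlt⟩).not_gt h

lemma distFun_add_distFun_le {g : α → ℝ} (hg : Measurable g) (t τ : ℝ) :
    distFun μ f t + distFun μ g τ ≤ μ univ + μ ({x | t < |f x|} ∩ {x | τ < |g x|}) := by
  rw [distFun, distFun, ← measure_union_add_inter _ (measurableSet_lt measurable_const hg.abs)]
  gcongr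
  exact subset_univ _

lemma volume_lt_decRearr_inter_le [IsFiniteMeasure μ] {g : α → ℝ} (hg : Measurable g)
    {t τ : ℝ} (ht : 0 ≤ t) (hτ : 0 ≤ τ) :
    volume ({s | t < decRearr μ f s} ∩ {s | τ < decRearr μ g ((μ univ).toReal - s)})
      ≤ μ ({x | t < |f x|} ∩ {x | τ < |g x|}) := by
  set M := (μ univ).toReal
  set a := (distFun μ f t).toReal
  set b := (distFun μ g τ).toReal
  have hsub : {s | t < decRearr μ f s} ∩ {s | τ < decRearr μ g (M - s)} ⊆ Icc (M - b) a := by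
    rintro s ⟨hfs, hgs⟩
    have hs_le_a : s ≤ a := (ENNReal.ofReal_le_iff_le_toReal (distFun_ne_top μ f t)).1
      (ofReal_le_distFun_of_lt_decRearr μ f ht hfs)
    have hMs_le_b : M - s ≤ b := (ENNReal.ofReal_le_iff_le_toReal (distFun_ne_top μ g τ)).1
      (ofReal_le_distFun_of_lt_decRearr μ g hτ hgs)
    exact ⟨by linarith, hs_le_a⟩
  have hab : a + b ≤ M + (μ ({x | t < |f x|} ∩ {x | τ < |g x|})).toReal := by
    have := ENNReal.toReal_mono (by finiteness) (distFun_add_distFun_le μ f hg t τ)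
    rwa [ENNReal.toReal_add (distFun_ne_top μ f t) (distFun_ne_top μ g τ),
      ENNReal.toReal_add (measure_ne_top _ _) (measure_ne_top _ _)] at this
  calc volume ({s | t < decRearr μ f s} ∩ {s | τ < decRearr μ g (M - s)})
      ≤ volume (Icc (M - b) a) := measure_mono hsub
    _ = ENNReal.ofReal (a - (M - b)) := Real.volume_Icc
    _ ≤ μ ({x | t < |f x|} ∩ {x | τ < |g x|}) := by
      rw [← ENNReal.ofReal_toReal (measure_ne_top μ _)]
      exact ENNReal.ofReal_le_ofReal (by linarith)

end Rearrangement

lemma lintegral_ofReal_mul_eq_lintegral_meas_lt_inter {β : Type*} [MeasurableSpace β]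
    (ν : Measure β) {F G : β → ℝ} (hF : Measurable F) (hG : Measurable G)
    (hF0 : ∀ x, 0 ≤ F x) (hG0 : ∀ x, 0 ≤ G x) :
    ∫⁻ x, ENNReal.ofReal (F x * G x) ∂ν
      = ∫⁻ t in Ioi 0, ∫⁻ τ in Ioi 0, ν ({x | t < F x} ∩ {x | τ < G x}) := by
  calc ∫⁻ x, ENNReal.ofReal (F x * G x) ∂ν
      = ∫⁻ x, ENNReal.ofReal (F x) ∂ν.withDensity fun x => ENNReal.ofReal (G x) := by
        rw [lintegral_withDensity_eq_lintegral_mul _ hG.ennreal_ofReal hF.ennreal_ofReal]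
        exact lintegral_congr fun x => by rw [ENNReal.ofReal_mul (hF0 x), mul_comm]; rfl
    _ = ∫⁻ t in Ioi 0, ∫⁻ x in {x | t < F x}, ENNReal.ofReal (G x) ∂ν := by
        rw [lintegral_eq_lintegral_meas_lt _ (ae_of_all _ hF0) hF.aemeasurable]
        exact lintegral_congr fun t => withDensity_apply _ (measurableSet_lt measurable_const hF)
    _ = ∫⁻ t in Ioi 0, ∫⁻ τ in Ioi 0, ν ({x | t < F x} ∩ {x | τ < G x}) := by
        refine lintegral_congr fun t => ?_
        rw [lintegral_eq_lintegral_meas_lt _ (ae_of_all _ hG0) hG.aemeasurable]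
        refine lintegral_congr fun τ => ?_
        rw [Measure.restrict_apply (measurableSet_lt measurable_const hG), inter_comm]

/-- Reverse Hardy–Littlewood inequality with the increasing rearrangement
    g_*(s) = g*(|Ω| - s). -/
theorem hardy_littlewood_increasing {α : Type*} [MeasurableSpace α]
    (μ : Measure α) [IsFiniteMeasure μ] (f g : α → ℝ)
    (hf : Measurable f) (hg : Measurable g)
    (hf0 : ∀ x, 0 ≤ f x) (hg0 : ∀ x, 0 ≤ g x) :
    ∫⁻ s in Set.Ioc (0 : ℝ) (μ Set.univ).toReal,
        ENNReal.ofReal (decRearr μ f s * decRearr μ g ((μ Set.univ).toReal - s))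
      ≤ ∫⁻ x, ENNReal.ofReal (f x * g x) ∂μ := by
  have hg_star : Measurable fun s => decRearr μ g ((μ univ).toReal - s) :=
    (measurable_decRearr μ g).comp (measurable_const.sub measurable_id)
  rw [lintegral_ofReal_mul_eq_lintegral_meas_lt_inter _ (measurable_decRearr μ f) hg_star
      (decRearr_nonneg μ f) fun s => decRearr_nonneg μ g _,
    lintegral_ofReal_mul_eq_lintegral_meas_lt_inter μ hf hg hf0 hg0]
  refine setLIntegral_mono' measurableSet_Ioi fun t ht =>
    setLIntegral_mono' measurableSet_Ioi fun τ hτ => ?_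
  calc _ ≤ volume ({s | t < decRearr μ f s} ∩ {s | τ < decRearr μ g ((μ univ).toReal - s)}) :=
        Measure.restrict_apply_le _ _
    _ ≤ μ ({x | t < |f x|} ∩ {x | τ < |g x|}) :=
        volume_lt_decRearr_inter_le μ f hg (le_of_lt ht) (le_of_lt hτ)
    _ = μ ({x | t < f x} ∩ {x | τ < g x}) := by
        simp only [abs_of_nonneg (hf0 _), abs_of_nonneg (hg0 _)]
end

section
/- The map sending a function to its decreasing rearrangement is a contraction in L^p: for f, g ∈ L^p(Ω), ‖f* − g*‖_{L^p([0,|Ω|])} ≤ ‖f − g‖_{L^p(Ω)}. -/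
set_option maxHeartbeats 1000000

open MeasureTheory Set Filter
open scoped ENNReal NNReal

set_option linter.unusedSectionVars false

namespace DecRearrAux


variable {α : Type*} [MeasurableSpace α] {μ : Measure α} [IsFiniteMeasure μ] {f g : α → ℝ}

lemma distFun_anti (μ : Measure α) (f : α → ℝ) : Antitone (distFun μ f) := fun _ _ h =>
  measure_mono fun _ hx => lt_of_le_of_lt h hx

lemma distFun_ne_top (μ : Measure α) [IsFiniteMeasure μ] (f : α → ℝ) (t : ℝ) :
    distFun μ f t ≠ ⊤ := measure_ne_top μ _

lemma bddT (μ : Measure α) (f : α → ℝ) (s : ℝ) :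
    BddBelow {t : ℝ | 0 ≤ t ∧ distFun μ f t < ENNReal.ofReal s} := ⟨0, fun _ hx => hx.1⟩

lemma nonemptyT (hf : Measurable f) {s : ℝ} (hs : 0 < s) :
    {t : ℝ | 0 ≤ t ∧ distFun μ f t < ENNReal.ofReal s}.Nonempty := by
  have h0 : (⋂ n : ℕ, {x | (n : ℝ) < |f x|}) = ∅ := by
    ext x
    simp only [mem_iInter, mem_setOf_eq, mem_empty_iff_false, iff_false, not_forall, not_lt]
    obtain ⟨n, hn⟩ := exists_nat_gt |f x|
    exact ⟨n, hn.le⟩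
  have hmeas : ∀ n : ℕ, NullMeasurableSet {x | (n : ℝ) < |f x|} μ := fun n =>
    (measurableSet_lt measurable_const hf.abs).nullMeasurableSet
  have hmono : Antitone fun n : ℕ => {x | (n : ℝ) < |f x|} := by
    intro n m h
    have hnm : (n : ℝ) ≤ m := by exact_mod_cast h
    exact fun x hx => lt_of_le_of_lt hnm hx
  have hdir : Directed (· ⊇ ·) fun n : ℕ => {x | (n : ℝ) < |f x|} := hmono.directed_ge
  have hInf := Directed.measure_iInter hmeas hdir ⟨0, measure_ne_top μ _⟩
  rw [h0, measure_empty] at hInf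
  have hlt : (⨅ n : ℕ, μ {x | (n : ℝ) < |f x|}) < ENNReal.ofReal s := by
    rw [← hInf]
    simpa using hs
  obtain ⟨n, hn⟩ := iInf_lt_iff.mp hlt
  exact ⟨n, n.cast_nonneg, hn⟩

lemma decRearr_nonneg (μ : Measure α) (f : α → ℝ) (s : ℝ) : 0 ≤ decRearr μ f s :=
  Real.sInf_nonneg fun _ hx => hx.1

lemma ofReal_le_of_lt_decRearr {s v : ℝ} (hv : 0 ≤ v) (h : v < decRearr μ f s) :
    ENNReal.ofReal s ≤ distFun μ f v := by
  by_contra hc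
  push_neg at hc
  exact absurd (csInf_le (bddT μ f s) ⟨hv, hc⟩) (not_le.mpr h)

lemma le_decRearr (hf : Measurable f) {s t : ℝ} (hs : 0 < s)
    (h : ENNReal.ofReal s ≤ distFun μ f t) : t ≤ decRearr μ f s := by
  refine le_csInf (nonemptyT hf hs) fun x hx => ?_
  by_contra hc
  push_neg at hc
  exact absurd ((h.trans (distFun_anti μ f hc.le)).trans_lt hx.2) (lt_irrefl _)

lemma distFun_iSup (f : α → ℝ) (u : ℝ) :
    distFun μ f u = ⨆ n : ℕ, distFun μ f (u + 1 / (n + 1)) := by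
  have hU : {x | u < |f x|} = ⋃ n : ℕ, {x | u + 1 / ((n : ℝ) + 1) < |f x|} := by
    ext x
    simp only [mem_setOf_eq, mem_iUnion]
    constructor
    · intro hx
      obtain ⟨n, hn⟩ := exists_nat_one_div_lt (sub_pos.mpr hx)
      exact ⟨n, by linarith⟩
    · rintro ⟨n, hn⟩
      have h1 : (0 : ℝ) < 1 / ((n : ℝ) + 1) := by positivity
      linarith
  have hmono : Monotone fun n : ℕ => {x | u + 1 / ((n : ℝ) + 1) < |f x|} := by
    intro n m h x hx
    have h1 : (1 : ℝ) / ((m : ℝ) + 1) ≤ 1 / ((n : ℝ) + 1) := by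
      apply one_div_le_one_div_of_le (by positivity)
      have := (Nat.cast_le (α := ℝ)).mpr h
      linarith
    simp only [mem_setOf_eq] at hx ⊢
    linarith
  rw [distFun, hU, hmono.directed_le.measure_iUnion]
  rfl

lemma lt_decRearr (hf : Measurable f) {s u : ℝ} (hs : 0 < s)
    (h : ENNReal.ofReal s < distFun μ f u) : u < decRearr μ f s := by
  rw [distFun_iSup f u] at h
  obtain ⟨n, hn⟩ := lt_iSup_iff.mp h
  have h2 : u + 1 / ((n : ℝ) + 1) ≤ decRearr μ f s := le_decRearr hf hs hn.le
  have h3 : (0 : ℝ) < 1 / ((n : ℝ) + 1) := by positivity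
  linarith

noncomputable def hFun (μ : Measure α) (f : α → ℝ) (s : ℝ) : ℝ :=
  if 0 < s then decRearr μ f s else 0

lemma hFun_nonneg (μ : Measure α) (f : α → ℝ) (s : ℝ) : 0 ≤ hFun μ f s := by
  unfold hFun
  split
  · exact decRearr_nonneg μ f s
  · exact le_refl 0

lemma hFun_preimage (hf : Measurable f) {v : ℝ} (hv : 0 ≤ v) :
    {s : ℝ | v < hFun μ f s}
      = ⋃ n : ℕ, Ioc 0 ((distFun μ f (v + 1 / ((n : ℝ) + 1))).toReal) := by
  ext s
  simp only [mem_setOf_eq, mem_iUnion, mem_Ioc]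
  constructor
  · intro h
    have hs : 0 < s := by
      by_contra hc
      rw [hFun, if_neg hc] at h
      exact absurd h (not_lt.mpr hv)
    rw [hFun, if_pos hs] at h
    obtain ⟨n, hn⟩ := exists_nat_one_div_lt (sub_pos.mpr h)
    have hp1 : (0 : ℝ) < 1 / ((n : ℝ) + 1) := by positivity
    have hle : ENNReal.ofReal s ≤ distFun μ f (v + 1 / ((n : ℝ) + 1)) :=
      ofReal_le_of_lt_decRearr (by linarith) (by linarith)
    refine ⟨n, hs, ?_⟩
    calc s = (ENNReal.ofReal s).toReal := (ENNReal.toReal_ofReal hs.le).symm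
      _ ≤ _ := ENNReal.toReal_mono (distFun_ne_top μ f _) hle
  · rintro ⟨n, hs, hle⟩
    have h1 : ENNReal.ofReal s ≤ distFun μ f (v + 1 / ((n : ℝ) + 1)) :=
      ENNReal.ofReal_le_of_le_toReal hle
    have h2 : v + 1 / ((n : ℝ) + 1) ≤ decRearr μ f s := le_decRearr hf hs h1
    have h3 : (0 : ℝ) < 1 / ((n : ℝ) + 1) := by positivity
    rw [hFun, if_pos hs]
    linarith

lemma measurable_hFun (hf : Measurable f) : Measurable (hFun μ f) := by
  apply measurable_of_Ioi
  intro v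
  rcases lt_or_ge v 0 with hv | hv
  · have : hFun μ f ⁻¹' Ioi v = univ := by
      ext s
      simp only [mem_preimage, mem_Ioi, mem_univ, iff_true]
      exact lt_of_lt_of_le hv (hFun_nonneg μ f s)
    rw [this]
    exact MeasurableSet.univ
  · have : hFun μ f ⁻¹' Ioi v = {s : ℝ | v < hFun μ f s} := rfl
    rw [this, hFun_preimage hf hv]
    exact MeasurableSet.iUnion fun n => measurableSet_Ioc

lemma key (hf : Measurable f) (hg : Measurable g) {u v : ℝ} (hu : 0 ≤ u) (hv : 0 ≤ v) :
    volume ({s : ℝ | hFun μ g s ≤ u ∧ v < hFun μ f s} ∩ Ioc 0 (μ univ).toReal)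
      ≤ μ {x | |g x| ≤ u ∧ v < |f x|} := by
  set a' := (distFun μ f v).toReal with ha'
  set b' := (distFun μ g u).toReal with hb'
  have hsub : {s : ℝ | hFun μ g s ≤ u ∧ v < hFun μ f s} ∩ Ioc 0 (μ univ).toReal
      ⊆ Icc b' a' := by
    rintro s ⟨⟨h1, h2⟩, hs0, _⟩
    constructor
    · by_contra hc
      push_neg at hc
      have hlt : ENNReal.ofReal s < distFun μ g u :=
        (ENNReal.ofReal_lt_iff_lt_toReal hs0.le (distFun_ne_top μ g u)).mpr hc
      have := lt_decRearr hg hs0 hlt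
      rw [hFun, if_pos hs0] at h1
      linarith
    · rw [hFun, if_pos hs0] at h2
      have hle := ofReal_le_of_lt_decRearr hv h2
      calc s = (ENNReal.ofReal s).toReal := (ENNReal.toReal_ofReal hs0.le).symm
        _ ≤ a' := ENNReal.toReal_mono (distFun_ne_top μ f v) hle
  calc volume ({s : ℝ | hFun μ g s ≤ u ∧ v < hFun μ f s} ∩ Ioc 0 (μ univ).toReal)
      ≤ volume (Icc b' a') := measure_mono hsub
    _ = ENNReal.ofReal (a' - b') := Real.volume_Icc
    _ = ENNReal.ofReal a' - ENNReal.ofReal b' := ENNReal.ofReal_sub _ ENNReal.toReal_nonneg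
    _ = distFun μ f v - distFun μ g u := by
        rw [ha', hb', ENNReal.ofReal_toReal (distFun_ne_top μ f v),
          ENNReal.ofReal_toReal (distFun_ne_top μ g u)]
    _ ≤ μ ({x | v < |f x|} \ {x | u < |g x|}) := by
        rw [tsub_le_iff_right]
        calc distFun μ f v = μ {x | v < |f x|} := rfl
          _ ≤ μ (({x | v < |f x|} \ {x | u < |g x|}) ∪ {x | u < |g x|}) :=
              measure_mono (subset_diff_union _ _)
          _ ≤ _ := measure_union_le _ _
    _ = μ {x | |g x| ≤ u ∧ v < |f x|} := by
        congr 1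
        ext x
        simp only [mem_diff, mem_setOf_eq, not_lt]
        tauto



/-- kernel for the double-layer representation of `|a-b|^p`, `p > 1`. -/
noncomputable def eKer (p v u a b : ℝ) : ℝ≥0∞ :=
  if 0 < u ∧ u < v ∧ ((b ≤ u ∧ v < a) ∨ (a ≤ u ∧ v < b)) then
    ENNReal.ofReal (p * (p - 1) * (v - u) ^ (p - 2)) else 0

lemma eKer_symm (p v u a b : ℝ) : eKer p v u a b = eKer p v u b a := by
  unfold eKer
  exact if_congr (by tauto) rfl rfl

lemma measurable_eKer (p : ℝ) :
    Measurable fun z : (ℝ × ℝ) × ℝ × ℝ => eKer p z.1.1 z.1.2 z.2.1 z.2.2 := by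
  unfold eKer
  have m1 : Measurable fun z : (ℝ × ℝ) × ℝ × ℝ => z.1.1 := measurable_fst.fst
  have m2 : Measurable fun z : (ℝ × ℝ) × ℝ × ℝ => z.1.2 := measurable_fst.snd
  have m3 : Measurable fun z : (ℝ × ℝ) × ℝ × ℝ => z.2.1 := measurable_snd.fst
  have m4 : Measurable fun z : (ℝ × ℝ) × ℝ × ℝ => z.2.2 := measurable_snd.snd
  refine Measurable.ite ?_ ?_ measurable_const
  · exact (measurableSet_lt measurable_const m2).inter ((measurableSet_lt m2 m1).inter
      (((measurableSet_le m4 m2).inter (measurableSet_lt m1 m3)).union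
        ((measurableSet_le m3 m2).inter (measurableSet_lt m1 m4))))
  · have hr : Measurable fun x : ℝ => x ^ (p - 2) := by measurability
    exact (measurable_const.mul (hr.comp (m1.sub m2))).ennreal_ofReal

lemma lint_reflect (c A B : ℝ) (g : ℝ → ℝ≥0∞) :
    ∫⁻ u in Ioo A B, g (c - u) = ∫⁻ w in Ioo (c - B) (c - A), g w := by
  have hmp : MeasurePreserving (fun u : ℝ => c - u) volume volume :=
    Measure.measurePreserving_sub_left volume c
  have hemb : MeasurableEmbedding (fun u : ℝ => c - u) :=
    (Homeomorph.subLeft c).measurableEmbedding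
  have hpre : (fun u : ℝ => c - u) ⁻¹' Ioo (c - B) (c - A) = Ioo A B := by
    ext u
    simp only [mem_preimage, mem_Ioo]
    constructor <;> rintro ⟨h1, h2⟩ <;> constructor <;> linarith
  rw [← hpre, hmp.setLIntegral_comp_preimage_emb hemb]

lemma lint_shift (c A B : ℝ) (g : ℝ → ℝ≥0∞) :
    ∫⁻ v in Ioo A B, g (v - c) = ∫⁻ w in Ioo (A - c) (B - c), g w := by
  have hmp : MeasurePreserving (fun u : ℝ => u - c) volume volume := by
    simpa [sub_eq_add_neg] using measurePreserving_add_right volume (-c)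
  have hemb : MeasurableEmbedding (fun u : ℝ => u - c) := by
    have := (Homeomorph.addRight (-c)).measurableEmbedding
    simpa [sub_eq_add_neg] using this
  have hpre : (fun u : ℝ => u - c) ⁻¹' Ioo (A - c) (B - c) = Ioo A B := by
    ext u
    simp only [mem_preimage, mem_Ioo]
    constructor <;> rintro ⟨h1, h2⟩ <;> constructor <;> linarith
  rw [← hpre, hmp.setLIntegral_comp_preimage_emb hemb]

lemma lint_Ioo_rpow {r z : ℝ} (hr : -1 < r) (hz : 0 ≤ z) :
    ∫⁻ w in Ioo 0 z, ENNReal.ofReal (w ^ r) = ENNReal.ofReal (z ^ (r + 1) / (r + 1)) := by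
  have hint : IntegrableOn (fun w : ℝ => w ^ r) (Ioo 0 z) := by
    have h := intervalIntegral.intervalIntegrable_rpow' (a := 0) (b := z) hr
    rw [intervalIntegrable_iff] at h
    refine h.mono_set ?_
    rw [uIoc_of_le hz]
    exact Ioo_subset_Ioc_self
  have hnn : 0 ≤ᵐ[volume.restrict (Ioo 0 z)] fun w : ℝ => w ^ r := by
    filter_upwards [ae_restrict_mem measurableSet_Ioo] with w hw
    exact Real.rpow_nonneg hw.1.le r
  rw [← ofReal_integral_eq_lintegral_ofReal hint hnn]
  congr 1
  rw [← integral_Ioc_eq_integral_Ioo, ← intervalIntegral.integral_of_le hz,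
    integral_rpow (Or.inl hr), Real.zero_rpow (by linarith), sub_zero]

lemma eKer_lintegral_aux {p : ℝ} (hp : 1 < p) :
    ∀ a b : ℝ, 0 ≤ b → b ≤ a →
      (∫⁻ q : ℝ × ℝ, eKer p q.1 q.2 a b) = ENNReal.ofReal ((a - b) ^ p) := by
  intro a b hb hba
  have hp0 : (0 : ℝ) < p := by linarith
  have hmeas : AEMeasurable (fun q : ℝ × ℝ => eKer p q.1 q.2 a b)
      ((volume : Measure ℝ).prod (volume : Measure ℝ)) := by
    have h1 : Measurable fun q : ℝ × ℝ => (q, ((a : ℝ), (b : ℝ))) :=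
      measurable_id.prodMk measurable_const
    exact ((measurable_eKer p).comp h1).aemeasurable
  rw [Measure.volume_eq_prod, lintegral_prod _ hmeas]
  have inner : ∀ v : ℝ, (∫⁻ u : ℝ, eKer p v u a b)
      = Set.indicator (Ioo b a) (fun v => ENNReal.ofReal (p * (v - b) ^ (p - 1))) v := by
    intro v
    by_cases hv : b < v ∧ v < a
    · rw [Set.indicator_of_mem (mem_Ioo.mpr hv)]
      have hcond : ∀ u : ℝ, eKer p v u a b
          = Set.indicator {u : ℝ | 0 < u ∧ b ≤ u ∧ u < v}
              (fun u => ENNReal.ofReal (p * (p - 1) * (v - u) ^ (p - 2))) u := by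
        intro u
        unfold eKer
        rw [Set.indicator_apply]
        by_cases hu : 0 < u ∧ b ≤ u ∧ u < v
        · rw [if_pos (show u ∈ {u : ℝ | 0 < u ∧ b ≤ u ∧ u < v} from hu),
            if_pos ⟨hu.1, hu.2.2, Or.inl ⟨hu.2.1, hv.2⟩⟩]
        · rw [if_neg (show u ∉ {u : ℝ | 0 < u ∧ b ≤ u ∧ u < v} from hu), if_neg]
          rintro ⟨h1, h2, h3 | h3⟩
          · exact hu ⟨h1, h3.1, h2⟩
          · linarith [h3.1, h3.2, hv.1, hv.2]
      have hmeasset : MeasurableSet {u : ℝ | 0 < u ∧ b ≤ u ∧ u < v} := by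
        have : {u : ℝ | 0 < u ∧ b ≤ u ∧ u < v} = Ioi 0 ∩ (Ici b ∩ Iio v) := by
          ext u; simp [mem_Ioi, mem_Ici, mem_Iio, and_assoc]
        rw [this]
        exact measurableSet_Ioi.inter (measurableSet_Ici.inter measurableSet_Iio)
      have haeeq : {u : ℝ | 0 < u ∧ b ≤ u ∧ u < v} =ᵐ[volume] Ioo b v := by
        rw [MeasureTheory.ae_eq_set]
        constructor
        · refine measure_mono_null (t := {b}) ?_ Real.volume_singleton
          rintro u ⟨⟨h1, h2, h3⟩, hu2⟩
          have hnb : ¬ b < u := fun hb2 => hu2 (mem_Ioo.mpr ⟨hb2, h3⟩)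
          exact mem_singleton_iff.mpr (le_antisymm (not_lt.mp hnb) h2)
        · refine measure_mono_null (t := {b}) ?_ Real.volume_singleton
          rintro u ⟨hu1, hu2⟩
          rw [mem_Ioo] at hu1
          exact absurd ⟨lt_of_le_of_lt hb hu1.1, hu1.1.le, hu1.2⟩ hu2
      simp_rw [hcond]
      rw [lintegral_indicator hmeasset, setLIntegral_congr haeeq]
      have hpull : ∀ u : ℝ, ENNReal.ofReal (p * (p - 1) * (v - u) ^ (p - 2))
          = ENNReal.ofReal (p * (p - 1)) * ENNReal.ofReal ((v - u) ^ (p - 2)) := fun u => by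
        rw [← ENNReal.ofReal_mul (by nlinarith)]
      simp_rw [hpull]
      have hrm : Measurable fun x : ℝ => x ^ (p - 2) := by measurability
      rw [lintegral_const_mul _ (show Measurable fun u : ℝ => ENNReal.ofReal ((v - u) ^ (p - 2)) from
        (hrm.comp (measurable_const.sub measurable_id)).ennreal_ofReal)]
      have hrefl : (∫⁻ u in Ioo b v, ENNReal.ofReal ((v - u) ^ (p - 2)))
          = ∫⁻ w in Ioo (v - v) (v - b), ENNReal.ofReal (w ^ (p - 2)) :=
        lint_reflect v b v (fun w => ENNReal.ofReal (w ^ (p - 2)))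
      rw [hrefl, sub_self, lint_Ioo_rpow (by linarith) (by linarith)]
      rw [← ENNReal.ofReal_mul (by nlinarith)]
      congr 1
      have he : p - 2 + 1 = p - 1 := by ring
      rw [he]
      have hne : p - 1 ≠ 0 := by linarith
      calc p * (p - 1) * ((v - b) ^ (p - 1) / (p - 1))
          = p * (v - b) ^ (p - 1) * ((p - 1) / (p - 1)) := by ring
        _ = p * (v - b) ^ (p - 1) := by rw [div_self hne, mul_one]
    · rw [Set.indicator_of_notMem (by simpa [mem_Ioo] using hv)]
      have hz : ∀ u : ℝ, eKer p v u a b = 0 := by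
        intro u
        unfold eKer
        rw [if_neg]
        rintro ⟨h1, h2, h3 | h3⟩
        · exact hv ⟨lt_of_le_of_lt h3.1 h2, h3.2⟩
        · linarith [h3.1, h3.2]
      simp_rw [hz]
      exact lintegral_zero
  rw [lintegral_congr inner, lintegral_indicator measurableSet_Ioo]
  have hshift : (∫⁻ v in Ioo b a, ENNReal.ofReal (p * (v - b) ^ (p - 1)))
      = ∫⁻ w in Ioo (b - b) (a - b), ENNReal.ofReal (p * w ^ (p - 1)) :=
    lint_shift b b a (fun w => ENNReal.ofReal (p * w ^ (p - 1)))
  rw [hshift, sub_self]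
  have hpull2 : ∀ w : ℝ, ENNReal.ofReal (p * w ^ (p - 1))
      = ENNReal.ofReal p * ENNReal.ofReal (w ^ (p - 1)) := fun w => by
    rw [← ENNReal.ofReal_mul hp0.le]
  simp_rw [hpull2]
  have hrm1 : Measurable fun x : ℝ => x ^ (p - 1) := by measurability
  rw [lintegral_const_mul _ (show Measurable fun w : ℝ => ENNReal.ofReal (w ^ (p - 1)) from
    hrm1.ennreal_ofReal), lint_Ioo_rpow (by linarith) (by linarith)]
  rw [← ENNReal.ofReal_mul hp0.le]
  congr 1
  have he : p - 1 + 1 = p := by ring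
  rw [he]
  calc p * ((a - b) ^ p / p) = (a - b) ^ p * (p / p) := by ring
    _ = (a - b) ^ p := by rw [div_self hp0.ne', mul_one]

lemma eKer_lintegral {p : ℝ} (hp : 1 < p) {a b : ℝ} (ha : 0 ≤ a) (hb : 0 ≤ b) :
    (∫⁻ q : ℝ × ℝ, eKer p q.1 q.2 a b) = ENNReal.ofReal (|a - b| ^ p) := by
  rcases le_total b a with h | h
  · rw [eKer_lintegral_aux hp a b hb h, abs_of_nonneg (by linarith)]
  · have hsymm : (∫⁻ q : ℝ × ℝ, eKer p q.1 q.2 a b) = ∫⁻ q : ℝ × ℝ, eKer p q.1 q.2 b a :=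
      lintegral_congr fun q => eKer_symm p q.1 q.2 a b
    rw [hsymm, eKer_lintegral_aux hp b a ha h, abs_of_nonpos (by linarith), neg_sub]

lemma lintegral_eKer_swap {α' : Type*} [MeasurableSpace α'] (m : Measure α') [SFinite m]
    {F G : α' → ℝ} (hF : Measurable F) (hG : Measurable G) (p : ℝ) :
    ∫⁻ s, (∫⁻ q : ℝ × ℝ, eKer p q.1 q.2 (F s) (G s)) ∂m
      = ∫⁻ q : ℝ × ℝ, (∫⁻ s, eKer p q.1 q.2 (F s) (G s) ∂m) := by
  apply lintegral_lintegral_swap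
  have : Measurable fun z : α' × ℝ × ℝ => eKer p z.2.1 z.2.2 (F z.1) (G z.1) :=
    (measurable_eKer p).comp ((measurable_snd.fst.prodMk measurable_snd.snd).prodMk
      ((hF.comp measurable_fst).prodMk (hG.comp measurable_fst)))
  exact this.aemeasurable

lemma lintegral_eKer_eq {α' : Type*} [MeasurableSpace α'] (m : Measure α') {F G : α' → ℝ}
    (hF : Measurable F) (hG : Measurable G) {p v u : ℝ} (h : 0 < u ∧ u < v) :
    ∫⁻ s, eKer p v u (F s) (G s) ∂m
      = ENNReal.ofReal (p * (p - 1) * (v - u) ^ (p - 2)) *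
          (m {s | G s ≤ u ∧ v < F s} + m {s | F s ≤ u ∧ v < G s}) := by
  have hind : ∀ s, eKer p v u (F s) (G s)
      = Set.indicator ({s | G s ≤ u ∧ v < F s} ∪ {s | F s ≤ u ∧ v < G s})
          (fun _ => ENNReal.ofReal (p * (p - 1) * (v - u) ^ (p - 2))) s := by
    intro s
    unfold eKer
    rw [Set.indicator_apply]
    by_cases hc : (G s ≤ u ∧ v < F s) ∨ (F s ≤ u ∧ v < G s)
    · rw [if_pos (show s ∈ {s | G s ≤ u ∧ v < F s} ∪ {s | F s ≤ u ∧ v < G s} from hc),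
        if_pos ⟨h.1, h.2, hc⟩]
    · rw [if_neg (show s ∉ {s | G s ≤ u ∧ v < F s} ∪ {s | F s ≤ u ∧ v < G s} from hc),
        if_neg fun hcc => hc hcc.2.2]
  have hmA : MeasurableSet {s | G s ≤ u ∧ v < F s} :=
    (measurableSet_le hG measurable_const).inter (measurableSet_lt measurable_const hF)
  have hmB : MeasurableSet {s | F s ≤ u ∧ v < G s} :=
    (measurableSet_le hF measurable_const).inter (measurableSet_lt measurable_const hG)
  have hdisj : Disjoint {s | G s ≤ u ∧ v < F s} {s | F s ≤ u ∧ v < G s} := by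
    rw [Set.disjoint_left]
    rintro s ⟨h1, h2⟩ ⟨h3, h4⟩
    have := h.2
    linarith
  simp_rw [hind]
  rw [lintegral_indicator (hmA.union hmB), setLIntegral_const, measure_union hdisj hmB]



noncomputable def e1 (t a b : ℝ) : ℝ≥0∞ :=
  if (b ≤ t ∧ t < a) ∨ (a ≤ t ∧ t < b) then 1 else 0

lemma measurable_e1 : Measurable fun z : ℝ × ℝ × ℝ => e1 z.1 z.2.1 z.2.2 := by
  unfold e1
  have m1 : Measurable fun z : ℝ × ℝ × ℝ => z.1 := measurable_fst
  have m2 : Measurable fun z : ℝ × ℝ × ℝ => z.2.1 := measurable_snd.fst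
  have m3 : Measurable fun z : ℝ × ℝ × ℝ => z.2.2 := measurable_snd.snd
  refine Measurable.ite ?_ measurable_const measurable_const
  exact ((measurableSet_le m3 m1).inter (measurableSet_lt m1 m2)).union
    ((measurableSet_le m2 m1).inter (measurableSet_lt m1 m3))

lemma e1_lintegral (a b : ℝ) : (∫⁻ t : ℝ, e1 t a b) = ENNReal.ofReal |a - b| := by
  have hind : ∀ t : ℝ, e1 t a b
      = Set.indicator (Ico b a ∪ Ico a b) (fun _ => (1 : ℝ≥0∞)) t := by
    intro t
    unfold e1
    rw [Set.indicator_apply]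
    have hmem : t ∈ Ico b a ∪ Ico a b ↔ (b ≤ t ∧ t < a) ∨ (a ≤ t ∧ t < b) := by
      simp [mem_union, mem_Ico]
    by_cases hc : (b ≤ t ∧ t < a) ∨ (a ≤ t ∧ t < b)
    · rw [if_pos hc, if_pos (hmem.mpr hc)]
    · rw [if_neg hc, if_neg (fun h => hc (hmem.mp h))]
  simp_rw [hind]
  rw [lintegral_indicator (measurableSet_Ico.union measurableSet_Ico), setLIntegral_const,
    one_mul]
  rcases le_total b a with h | h
  · rw [Ico_eq_empty (not_lt.mpr h), union_empty, Real.volume_Ico, abs_of_nonneg (by linarith)]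
  · rw [Ico_eq_empty (not_lt.mpr h), empty_union, Real.volume_Ico, abs_of_nonpos (by linarith),
      neg_sub]

lemma lintegral_e1_swap {α' : Type*} [MeasurableSpace α'] (m : Measure α') [SFinite m]
    {F G : α' → ℝ} (hF : Measurable F) (hG : Measurable G) :
    ∫⁻ s, (∫⁻ t : ℝ, e1 t (F s) (G s)) ∂m = ∫⁻ t : ℝ, (∫⁻ s, e1 t (F s) (G s) ∂m) := by
  apply lintegral_lintegral_swap
  have h1 : Measurable fun z : α' × ℝ => (z.2, (F z.1, G z.1)) :=
    measurable_snd.prodMk ((hF.comp measurable_fst).prodMk (hG.comp measurable_fst))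
  exact (measurable_e1.comp h1).aemeasurable

lemma lintegral_e1_eq {α' : Type*} [MeasurableSpace α'] (m : Measure α') {F G : α' → ℝ}
    (hF : Measurable F) (hG : Measurable G) (t : ℝ) :
    ∫⁻ s, e1 t (F s) (G s) ∂m
      = m {s | G s ≤ t ∧ t < F s} + m {s | F s ≤ t ∧ t < G s} := by
  have hmA : MeasurableSet {s | G s ≤ t ∧ t < F s} :=
    (measurableSet_le hG measurable_const).inter (measurableSet_lt measurable_const hF)
  have hmB : MeasurableSet {s | F s ≤ t ∧ t < G s} :=
    (measurableSet_le hF measurable_const).inter (measurableSet_lt measurable_const hG)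
  have hdisj : Disjoint {s | G s ≤ t ∧ t < F s} {s | F s ≤ t ∧ t < G s} := by
    rw [Set.disjoint_left]
    rintro s ⟨h1, h2⟩ ⟨h3, h4⟩
    linarith
  have hind : ∀ s, e1 t (F s) (G s)
      = Set.indicator ({s | G s ≤ t ∧ t < F s} ∪ {s | F s ≤ t ∧ t < G s})
          (fun _ => (1 : ℝ≥0∞)) s := by
    intro s
    unfold e1
    rw [Set.indicator_apply]
    by_cases hc : (G s ≤ t ∧ t < F s) ∨ (F s ≤ t ∧ t < G s)
    · rw [if_pos hc,
        if_pos (show s ∈ {s | G s ≤ t ∧ t < F s} ∪ {s | F s ≤ t ∧ t < G s} from hc)]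
    · rw [if_neg hc,
        if_neg (show s ∉ {s | G s ≤ t ∧ t < F s} ∪ {s | F s ≤ t ∧ t < G s} from hc)]
  simp_rw [hind]
  rw [lintegral_indicator (hmA.union hmB), setLIntegral_const, one_mul,
    measure_union hdisj hmB]


end DecRearrAux

open DecRearrAux

/-- The decreasing rearrangement is a contraction in `L^p`:
    ‖f* - g*‖_{L^p([0,|Ω|])} ≤ ‖f - g‖_{L^p(Ω)}. -/
theorem decRearr_contraction {α : Type*} [MeasurableSpace α]
    (μ : Measure α) [IsFiniteMeasure μ] (f g : α → ℝ)
    (hf : Measurable f) (hg : Measurable g) (p : ℝ) (hp : 1 ≤ p)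
    (hfp : MemLp f (ENNReal.ofReal p) μ) (hgp : MemLp g (ENNReal.ofReal p) μ) :
    (∫⁻ s in Set.Ioc (0 : ℝ) (μ Set.univ).toReal,
        ENNReal.ofReal (|decRearr μ f s - decRearr μ g s| ^ p)) ^ (1 / p)
      ≤ (∫⁻ x, ENNReal.ofReal (|f x - g x| ^ p) ∂μ) ^ (1 / p) := by
  have hp0 : (0 : ℝ) < p := lt_of_lt_of_le one_pos hp
  refine ENNReal.rpow_le_rpow ?_ (by positivity)
  set M' := (μ Set.univ).toReal with hM'
  have hmf : Measurable (hFun μ f) := measurable_hFun hf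
  have hmg : Measurable (hFun μ g) := measurable_hFun hg
  have hmabsf : Measurable fun x => |f x| := hf.abs
  have hmabsg : Measurable fun x => |g x| := hg.abs
  have hcongr : (∫⁻ s in Set.Ioc (0 : ℝ) M', ENNReal.ofReal (|decRearr μ f s - decRearr μ g s| ^ p))
      = ∫⁻ s in Set.Ioc (0 : ℝ) M', ENNReal.ofReal (|hFun μ f s - hFun μ g s| ^ p) := by
    refine setLIntegral_congr_fun measurableSet_Ioc (fun s hs => ?_)
    simp only [hFun, if_pos hs.1]
  rw [hcongr]
  have habs : ∀ x, ENNReal.ofReal (|(|f x| - |g x|)| ^ p) ≤ ENNReal.ofReal (|f x - g x| ^ p) :=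
    fun x => ENNReal.ofReal_le_ofReal
      (Real.rpow_le_rpow (abs_nonneg _) (abs_abs_sub_abs_le_abs_sub _ _) hp0.le)
  rcases eq_or_lt_of_le hp with hp1 | hp1
  · -- p = 1
    subst hp1
    simp only [Real.rpow_one]
    calc (∫⁻ s in Set.Ioc (0 : ℝ) M', ENNReal.ofReal |hFun μ f s - hFun μ g s|)
        = ∫⁻ s in Set.Ioc (0 : ℝ) M', (∫⁻ t : ℝ, e1 t (hFun μ f s) (hFun μ g s)) :=
          lintegral_congr fun s => (e1_lintegral _ _).symm
      _ = ∫⁻ t : ℝ, (∫⁻ s in Set.Ioc (0 : ℝ) M', e1 t (hFun μ f s) (hFun μ g s)) :=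
          lintegral_e1_swap _ hmf hmg
      _ ≤ ∫⁻ t : ℝ, (∫⁻ x, e1 t |f x| |g x| ∂μ) := by
          refine lintegral_mono fun t => ?_
          rw [lintegral_e1_eq _ hmf hmg t, lintegral_e1_eq μ hmabsf hmabsg t]
          rcases le_or_gt 0 t with ht | ht
          · refine add_le_add ?_ ?_
            · rw [Measure.restrict_apply (show MeasurableSet {s : ℝ | hFun μ g s ≤ t ∧ t < hFun μ f s} from
                (measurableSet_le hmg measurable_const).inter
                  (measurableSet_lt measurable_const hmf))]
              exact key hf hg ht ht
            · rw [Measure.restrict_apply (show MeasurableSet {s : ℝ | hFun μ f s ≤ t ∧ t < hFun μ g s} from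
                (measurableSet_le hmf measurable_const).inter
                  (measurableSet_lt measurable_const hmg))]
              exact key hg hf ht ht
          · have h1 : {s | hFun μ g s ≤ t ∧ t < hFun μ f s} = ∅ := by
              ext s
              simp only [mem_setOf_eq, mem_empty_iff_false, iff_false, not_and]
              intro hle
              exact absurd (le_trans (hFun_nonneg μ g s) hle) (not_le.mpr ht)
            have h2 : {s | hFun μ f s ≤ t ∧ t < hFun μ g s} = ∅ := by
              ext s
              simp only [mem_setOf_eq, mem_empty_iff_false, iff_false, not_and]
              intro hle
              exact absurd (le_trans (hFun_nonneg μ f s) hle) (not_le.mpr ht)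
            simp [h1, h2]
      _ = ∫⁻ x, (∫⁻ t : ℝ, e1 t |f x| |g x|) ∂μ := (lintegral_e1_swap μ hmabsf hmabsg).symm
      _ = ∫⁻ x, ENNReal.ofReal |(|f x| - |g x|)| ∂μ := lintegral_congr fun x => e1_lintegral _ _
      _ ≤ ∫⁻ x, ENNReal.ofReal (|f x - g x|) ∂μ := by
          refine lintegral_mono fun x => ?_
          have := habs x
          simpa [Real.rpow_one] using this
  · -- 1 < p
    calc (∫⁻ s in Set.Ioc (0 : ℝ) M', ENNReal.ofReal (|hFun μ f s - hFun μ g s| ^ p))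
        = ∫⁻ s in Set.Ioc (0 : ℝ) M', (∫⁻ q : ℝ × ℝ, eKer p q.1 q.2 (hFun μ f s) (hFun μ g s)) :=
          lintegral_congr fun s =>
            (eKer_lintegral hp1 (hFun_nonneg μ f s) (hFun_nonneg μ g s)).symm
      _ = ∫⁻ q : ℝ × ℝ, (∫⁻ s in Set.Ioc (0 : ℝ) M', eKer p q.1 q.2 (hFun μ f s) (hFun μ g s)) :=
          lintegral_eKer_swap _ hmf hmg p
      _ ≤ ∫⁻ q : ℝ × ℝ, (∫⁻ x, eKer p q.1 q.2 |f x| |g x| ∂μ) := by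
          refine lintegral_mono fun q => ?_
          by_cases hq : 0 < q.2 ∧ q.2 < q.1
          · rw [lintegral_eKer_eq _ hmf hmg hq, lintegral_eKer_eq μ hmabsf hmabsg hq]
            refine mul_le_mul' le_rfl (add_le_add ?_ ?_)
            · rw [Measure.restrict_apply (show MeasurableSet {s : ℝ | hFun μ g s ≤ q.2 ∧ q.1 < hFun μ f s} from
                (measurableSet_le hmg measurable_const).inter
                  (measurableSet_lt measurable_const hmf))]
              exact key hf hg hq.1.le (hq.1.trans hq.2).le
            · rw [Measure.restrict_apply (show MeasurableSet {s : ℝ | hFun μ f s ≤ q.2 ∧ q.1 < hFun μ g s} from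
                (measurableSet_le hmf measurable_const).inter
                  (measurableSet_lt measurable_const hmg))]
              exact key hg hf hq.1.le (hq.1.trans hq.2).le
          · have hz : ∀ a b : ℝ, eKer p q.1 q.2 a b = 0 := fun a b => by
              unfold eKer
              exact if_neg fun hc => hq ⟨hc.1, hc.2.1⟩
            simp [hz]
      _ = ∫⁻ x, (∫⁻ q : ℝ × ℝ, eKer p q.1 q.2 |f x| |g x|) ∂μ :=
          (lintegral_eKer_swap μ hmabsf hmabsg p).symm
      _ = ∫⁻ x, ENNReal.ofReal (|(|f x| - |g x|)| ^ p) ∂μ :=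
          lintegral_congr fun x => eKer_lintegral hp1 (abs_nonneg _) (abs_nonneg _)
      _ ≤ ∫⁻ x, ENNReal.ofReal (|f x - g x| ^ p) ∂μ := lintegral_mono habs
end
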